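/- Let N ≥ 2 be an integer, x ∈ ℝ^N, and for an index n ∈ {1,…,N} let x̄_n ∈ ℝ^{N−1} denote the vector obtained from x by deleting its n-th entry. Then var(x) = ((N−1)/N²) · ( (x_n − μ(x̄_n))² + N·var(x̄_n) ), where μ(x̄_n) and var(x̄_n) are the mean and variance of the (N−1)-dimensional vector x̄_n. -/
import Mathlib


/-- Mean of the first `K` entries of a real sequence. -/
noncomputable def vmean (K : ℕ) (x : ℕ → ℝ) : ℝ :=
  (∑ n ∈ Finset.range K, x n) / (K : ℝ)

/-- Variance of the first `K` entries of a real sequence. -/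
noncomputable def vvar (K : ℕ) (x : ℕ → ℝ) : ℝ :=
  (∑ n ∈ Finset.range K, (x n) ^ 2) / (K : ℝ) - (vmean K x) ^ 2

/-- The vector obtained from `x` by deleting its entry at (0-based) index `n`. -/
def deleteEntry (x : ℕ → ℝ) (n : ℕ) : ℕ → ℝ :=
  fun k => if k < n then x k else x (k + 1)

lemma sum_del (N n : ℕ) (hn : n < N) (f : ℕ → ℝ) :
    ∑ k ∈ Finset.range (N-1), deleteEntry f n k
      = (∑ k ∈ Finset.range N, f k) - f n := by
  induction N with
  | zero => omega
  | succ m ih =>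
    rcases Nat.lt_or_ge n m with h | h
    · have hm : 1 ≤ m := by omega
      have hm1 : m - 1 + 1 = m := by omega
      rw [Nat.succ_sub_one, ← hm1, Finset.sum_range_succ, Finset.sum_range_succ,
        hm1, ih h]
      have : deleteEntry f n (m-1) = f m := by
        unfold deleteEntry
        rw [if_neg (by omega), Nat.sub_add_cancel hm]
      rw [this]; ring
    · have hnm : n = m := by omega
      subst hnm
      rw [Nat.succ_sub_one, Finset.sum_range_succ]
      have : ∀ k ∈ Finset.range n, deleteEntry f n k = f k := by
        intro k hk
        simp only [Finset.mem_range] at hk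
        unfold deleteEntry; rw [if_pos hk]
      rw [Finset.sum_congr rfl this]; ring

/-- `var(x) = ((N-1)/N²)((x_n - μ(x̄_n))² + N var(x̄_n))`,
where `x̄_n` is `x` with its `n`-th entry deleted. -/
theorem var_split_delete (N : ℕ) (hN : 2 ≤ N) (x : ℕ → ℝ) (n : ℕ) (hn : n < N) :
    vvar N x =
      (((N : ℝ) - 1) / (N : ℝ) ^ 2) *
        ((x n - vmean (N - 1) (deleteEntry x n)) ^ 2
          + (N : ℝ) * vvar (N - 1) (deleteEntry x n)) := by
  have hsq : ∀ k, (deleteEntry x n k) ^ 2 = deleteEntry (fun j => (x j)^2) n k := by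
    intro k; unfold deleteEntry; split <;> rfl
  have h1 : ∑ k ∈ Finset.range (N-1), deleteEntry x n k
      = (∑ k ∈ Finset.range N, x k) - x n := sum_del N n hn x
  have h2 : ∑ k ∈ Finset.range (N-1), (deleteEntry x n k) ^ 2
      = (∑ k ∈ Finset.range N, (x k) ^ 2) - (x n) ^ 2 := by
    simp only [hsq]; exact sum_del N n hn _
  have hcast : ((N - 1 : ℕ) : ℝ) = (N : ℝ) - 1 := by
    rw [Nat.cast_sub (by omega)]; norm_num
  have hM : (N : ℝ) ≠ 0 := by positivity
  have hM1 : (N : ℝ) - 1 ≠ 0 := by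
    have : (2 : ℝ) ≤ (N : ℝ) := by exact_mod_cast hN
    linarith
  unfold vvar vmean
  rw [h1, h2, hcast]
  field_simp
  ring
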